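/- Let Q be a symmetric real n×n matrix with eigenvalue λ and eigenvector x₁ ≠ 0, and let t be a real number with a_{k−1}(t) ≠ 0 and b_k(t) − λ·a_{k−1}(t) = 0. Define x_i = (a_{k−i}(t)/a_{k−1}(t))·x₁ for 2 ≤ i ≤ k and x = (x₁ᵀ, x₂ᵀ, …, x_kᵀ)ᵀ ∈ ℝ^{nk}. Then the block-tridiagonal matrix Q_k with diagonal blocks Q + I, 2I, …, 2I, I (first block Q+I, middle blocks 2I, last block I) and off-diagonal blocks I satisfies Q_k x = t·x. -/
import Mathlib


open Polynomial Matrix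

noncomputable def aSeq : ℕ → Polynomial ℝ
  | 0 => 1
  | 1 => X - 1
  | (k + 2) => (X - 2) * aSeq (k + 1) - aSeq k

noncomputable def bSeq : ℕ → Polynomial ℝ
  | 0 => 1
  | 1 => X - 1
  | (k + 2) => (X - 1) * aSeq (k + 1) - aSeq k

/-- The block tridiagonal matrix `Q_k` with diagonal blocks `Q+I, 2I, …, 2I, I`
and off-diagonal blocks `I`. -/
noncomputable def Qblock {n : ℕ} (Q : Matrix (Fin n) (Fin n) ℝ) (k : ℕ) :
    Matrix (Fin k × Fin n) (Fin k × Fin n) ℝ :=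
  Matrix.of fun p q =>
    if p.1 = q.1 then
      (if p.1.val = 0 then Q p.2 q.2 + (if p.2 = q.2 then 1 else 0)
       else if p.1.val = k - 1 then (if p.2 = q.2 then 1 else 0)
       else 2 * (if p.2 = q.2 then (1 : ℝ) else 0))
    else if p.1.val + 1 = q.1.val ∨ q.1.val + 1 = p.1.val then
      (if p.2 = q.2 then 1 else 0)
    else 0

lemma aSeq_rec (m : ℕ) (t : ℝ) :
    (aSeq (m + 2)).eval t = (t - 2) * (aSeq (m + 1)).eval t - (aSeq m).eval t := by
  simp [aSeq]

lemma bSeq_eval {k : ℕ} (hk : 2 ≤ k) (t : ℝ) :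
    (bSeq k).eval t = (t - 1) * (aSeq (k - 1)).eval t - (aSeq (k - 2)).eval t := by
  obtain ⟨m, rfl⟩ : ∃ m, k = m + 2 := ⟨k - 2, by omega⟩
  simp [bSeq]

lemma sum_val_eq {k : ℕ} (m : ℕ) (f : Fin k → ℝ) :
    (∑ i' : Fin k, if (i' : ℕ) = m then f i' else 0) =
      if h : m < k then f ⟨m, h⟩ else 0 := by
  split
  · next h =>
    rw [Finset.sum_eq_single ⟨m, h⟩]
    · simp
    · intro b _ hb
      rw [if_neg]
      intro hbm
      exact hb (Fin.ext (by simpa using hbm))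
    · simp
  · next h =>
    apply Finset.sum_eq_zero
    intro b _
    have : (b : ℕ) < k := b.isLt
    rw [if_neg (by omega)]

lemma sum_val_succ_eq {k : ℕ} (m : ℕ) (f : Fin k → ℝ) :
    (∑ i' : Fin k, if (i' : ℕ) + 1 = m then f i' else 0) =
      if h : m - 1 < k ∧ 1 ≤ m then f ⟨m - 1, h.1⟩ else 0 := by
  split
  · next h =>
    rw [Finset.sum_eq_single ⟨m - 1, h.1⟩]
    · rw [if_pos (by simp only [Fin.val_mk]; omega)]
    · intro b _ hb
      rw [if_neg]
      intro hbm
      exact hb (Fin.ext (by simp only [Fin.val_mk]; omega))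
    · simp
  · next h =>
    apply Finset.sum_eq_zero
    intro b _
    have : (b : ℕ) < k := b.isLt
    rw [if_neg (by omega)]

theorem Qblock_eigenvector {n k : ℕ} (hk : 2 ≤ k)
    (Q : Matrix (Fin n) (Fin n) ℝ) (hQ : Q.IsSymm)
    (lam : ℝ) (x₁ : Fin n → ℝ) (hx₁ : x₁ ≠ 0)
    (heig : Q.mulVec x₁ = lam • x₁) (t : ℝ)
    (ha : (aSeq (k - 1)).eval t ≠ 0)
    (hroot : (bSeq k).eval t - lam * (aSeq (k - 1)).eval t = 0) :
    (Qblock Q k).mulVec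
        (fun p => ((aSeq (k - 1 - p.1.val)).eval t / (aSeq (k - 1)).eval t) * x₁ p.2)
      = t • (fun p : Fin k × Fin n =>
          ((aSeq (k - 1 - p.1.val)).eval t / (aSeq (k - 1)).eval t) * x₁ p.2) := by
  have hQx : ∀ j, (∑ j' : Fin n, Q j j' * x₁ j') = lam * x₁ j := by
    intro j
    have := congrFun heig j
    simpa [Matrix.mulVec, dotProduct] using this
  have hlam : lam * (aSeq (k - 1)).eval t
      = (t - 1) * (aSeq (k - 1)).eval t - (aSeq (k - 2)).eval t := by
    rw [bSeq_eval hk t] at hroot; linarith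
  set A : ℕ → ℝ := fun m => (aSeq m).eval t with hA
  set c : Fin k → ℝ := fun i' => A (k - 1 - i'.val) / A (k - 1) with hc
  funext p
  obtain ⟨i, j⟩ := p
  show (∑ q : Fin k × Fin n, Qblock Q k (i, j) q * (c q.1 * x₁ q.2)) = t * (c i * x₁ j)
  rw [Fintype.sum_prod_type]
  have hinner : ∀ i' : Fin k,
      (∑ j' : Fin n, Qblock Q k (i, j) (i', j') * (c i' * x₁ j')) =
        (if i' = i then
            c i * (if i.val = 0 then lam * x₁ j + x₁ j
              else if i.val = k - 1 then x₁ j else 2 * x₁ j)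
          else 0)
        + (if (i' : ℕ) = i.val + 1 then c i' * x₁ j else 0)
        + (if (i' : ℕ) + 1 = i.val then c i' * x₁ j else 0) := by
    intro i'
    by_cases h1 : i' = i
    · subst h1
      have h2 : ¬ ((i' : ℕ) = i'.val + 1) := by omega
      have h3 : ¬ ((i' : ℕ) + 1 = i'.val) := by omega
      rw [if_pos rfl, if_neg h2, if_neg h3, add_zero, add_zero]
      by_cases hi0 : (i' : ℕ) = 0
      · have key : ∀ j' : Fin n,
            Qblock Q k (i', j) (i', j') * (c i' * x₁ j') =
              c i' * (Q j j' * x₁ j') + (if j = j' then c i' * x₁ j' else 0) := by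
          intro j'
          show (if (i' : Fin k) = i' then _ else _) * _ = _
          rw [if_pos rfl, if_pos hi0]
          split_ifs <;> ring
        rw [Finset.sum_congr rfl fun j' _ => key j', Finset.sum_add_distrib,
          ← Finset.mul_sum, hQx j, Finset.sum_ite_eq, if_pos (Finset.mem_univ j),
          if_pos hi0]
        ring
      · by_cases hik : (i' : ℕ) = k - 1
        · have key : ∀ j' : Fin n,
              Qblock Q k (i', j) (i', j') * (c i' * x₁ j') =
                (if j = j' then c i' * x₁ j' else 0) := by
            intro j'
            show (if (i' : Fin k) = i' then _ else _) * _ = _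
            rw [if_pos rfl, if_neg hi0, if_pos hik]
            split_ifs <;> ring
          rw [Finset.sum_congr rfl fun j' _ => key j', Finset.sum_ite_eq,
            if_pos (Finset.mem_univ j), if_neg hi0, if_pos hik]
        · have key : ∀ j' : Fin n,
              Qblock Q k (i', j) (i', j') * (c i' * x₁ j') =
                (if j = j' then c i' * (2 * x₁ j') else 0) := by
            intro j'
            show (if (i' : Fin k) = i' then _ else _) * _ = _
            rw [if_pos rfl, if_neg hi0, if_neg hik]
            split_ifs <;> ring
          rw [Finset.sum_congr rfl fun j' _ => key j', Finset.sum_ite_eq,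
            if_pos (Finset.mem_univ j), if_neg hi0, if_neg hik]
    · have h1' : ¬ ((i : Fin k) = i') := fun h => h1 h.symm
      rw [if_neg h1, zero_add]
      by_cases h2 : (i : ℕ) + 1 = i'.val
      · have h3 : ¬ ((i' : ℕ) + 1 = i.val) := by omega
        rw [if_neg h3, add_zero, if_pos (by omega : (i' : ℕ) = i.val + 1)]
        have key : ∀ j' : Fin n,
            Qblock Q k (i, j) (i', j') * (c i' * x₁ j') =
              (if j = j' then c i' * x₁ j' else 0) := by
          intro j'
          show (if (i : Fin k) = i' then _ else _) * _ = _
          rw [if_neg h1', if_pos (Or.inl h2)]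
          split_ifs <;> ring
        rw [Finset.sum_congr rfl fun j' _ => key j', Finset.sum_ite_eq,
          if_pos (Finset.mem_univ j)]
      · by_cases h3 : (i' : ℕ) + 1 = i.val
        · rw [if_pos h3, if_neg (by omega : ¬ ((i' : ℕ) = i.val + 1)), zero_add]
          have key : ∀ j' : Fin n,
              Qblock Q k (i, j) (i', j') * (c i' * x₁ j') =
                (if j = j' then c i' * x₁ j' else 0) := by
            intro j'
            show (if (i : Fin k) = i' then _ else _) * _ = _
            rw [if_neg h1', if_pos (Or.inr h3)]
            split_ifs <;> ring
          rw [Finset.sum_congr rfl fun j' _ => key j', Finset.sum_ite_eq,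
            if_pos (Finset.mem_univ j)]
        · rw [if_neg (by omega : ¬ ((i' : ℕ) = i.val + 1)), if_neg h3, add_zero]
          apply Finset.sum_eq_zero
          intro j' _
          show (if (i : Fin k) = i' then _ else _) * _ = 0
          rw [if_neg h1', if_neg (by push_neg; exact ⟨h2, h3⟩), zero_mul]
  rw [Finset.sum_congr rfl fun i' _ => hinner i', Finset.sum_add_distrib,
    Finset.sum_add_distrib, Finset.sum_ite_eq' Finset.univ i, if_pos (Finset.mem_univ i),
    sum_val_eq, sum_val_succ_eq]
  by_cases hi0 : (i : ℕ) = 0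
  · rw [if_pos hi0, dif_pos (by omega : (i : ℕ) + 1 < k),
      dif_neg (by omega : ¬ ((i : ℕ) - 1 < k ∧ 1 ≤ (i : ℕ)))]
    have e1 : k - 1 - (i : ℕ) = k - 1 := by omega
    have e2 : k - 1 - ((⟨(i : ℕ) + 1, by omega⟩ : Fin k) : ℕ) = k - 2 := by
      simp only [Fin.val_mk]; omega
    simp only [hc, hA, e1, e2]
    field_simp
    linear_combination x₁ j * hlam
  · by_cases hik : (i : ℕ) = k - 1
    · rw [if_neg hi0, if_pos hik, dif_neg (by omega : ¬ ((i : ℕ) + 1 < k)),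
        dif_pos (by omega : (i : ℕ) - 1 < k ∧ 1 ≤ (i : ℕ))]
      have e1 : k - 1 - (i : ℕ) = 0 := by omega
      have e2 : k - 1 - ((⟨(i : ℕ) - 1, by omega⟩ : Fin k) : ℕ) = 1 := by
        simp only [Fin.val_mk]; omega
      have ea0 : (aSeq 0).eval t = 1 := by simp [aSeq]
      have ea1 : (aSeq 1).eval t = t - 1 := by simp [aSeq]
      simp only [hc, hA, e1, e2, ea0, ea1]
      field_simp
      ring
    · rw [if_neg hi0, if_neg hik, dif_pos (by omega : (i : ℕ) + 1 < k),
        dif_pos (by omega : (i : ℕ) - 1 < k ∧ 1 ≤ (i : ℕ))]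
      set m := k - 2 - (i : ℕ) with hm
      have e1 : k - 1 - (i : ℕ) = m + 1 := by omega
      have e2 : k - 1 - ((⟨(i : ℕ) + 1, by omega⟩ : Fin k) : ℕ) = m := by
        simp only [Fin.val_mk]; omega
      have e3 : k - 1 - ((⟨(i : ℕ) - 1, by omega⟩ : Fin k) : ℕ) = m + 2 := by
        simp only [Fin.val_mk]; omega
      simp only [hc, hA, e1, e2, e3]
      have hrec := aSeq_rec m t
      field_simp
      linear_combination x₁ j * hrec
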